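/- arXiv:2309.14142 — 5 statements merged into one kernel-verified Lean document; each statement's English description precedes it below -/
import Mathlib

section
/- Let A be a square matrix whose every eigenvalue either equals 1 or has modulus strictly less than 1, and suppose the eigenvalue 1 is semi-simple. If M is a matrix with orthonormal columns whose column space is orthogonal to the eigenspace of A for eigenvalue 1 and is A-invariant in the sense that Mᵀ A M captures the restriction of A, then all eigenvalues of Mᵀ A M have modulus strictly less than 1 (i.e., Mᵀ A M is Schur stable). -/
open Matrix

lemma mem_spectrum_iff_exists_mulVec {n : ℕ} (T : Matrix (Fin n) (Fin n) ℂ) (μ : ℂ) :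
    μ ∈ spectrum ℂ T ↔ ∃ v : Fin n → ℂ, v ≠ 0 ∧ T.mulVec v = μ • v := by
  rw [← AlgEquiv.spectrum_eq (Matrix.toLinAlgEquiv <| Pi.basisFun ℂ (Fin n)),
    ← Module.End.hasEigenvalue_iff_mem_spectrum]
  have key : ∀ u : Fin n → ℂ, (Matrix.toLinAlgEquiv (Pi.basisFun ℂ (Fin n))) T u = T.mulVec u := by
    intro u
    funext i
    simp [Matrix.toLinAlgEquiv_apply, Pi.basisFun_repr, Pi.basisFun_apply, Pi.single_apply,
      mul_ite, mul_one, mul_zero, Finset.sum_ite_eq, Matrix.mulVec, dotProduct]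
  constructor
  · intro h
    obtain ⟨v, hv⟩ := h.exists_hasEigenvector
    refine ⟨v, hv.2, ?_⟩
    have := hv.apply_eq_smul
    rwa [key] at this
  · rintro ⟨v, hv0, hv⟩
    apply Module.End.hasEigenvalue_of_hasEigenvector (x := v)
    rw [Module.End.hasEigenvector_iff, Module.End.mem_eigenspace_iff, key]
    exact ⟨hv, hv0⟩

theorem restricted_matrix_schur {m b : ℕ} (A : Matrix (Fin m) (Fin m) ℝ)
    (B : Matrix (Fin m) (Fin b) ℝ) (M : Matrix (Fin m) (Fin (m - b)) ℝ)
    (hBo : Bᵀ * B = 1)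
    (hBspan : ∀ v : Fin m → ℝ, A.mulVec v = v ↔ ∃ c : Fin b → ℝ, v = B.mulVec c)
    (hM : Mᵀ * M = 1) (hBM : Bᵀ * M = 0)
    (hspec : ∀ μ ∈ spectrum ℂ (A.map (algebraMap ℝ ℂ)), μ = 1 ∨ ‖μ‖ < 1)
    (hsemi : ∀ v : Fin m → ℝ,
      (A - 1).mulVec ((A - 1).mulVec v) = 0 → (A - 1).mulVec v = 0)
    (hinv : A * M = M * (Mᵀ * A * M)) :
    ∀ μ ∈ spectrum ℂ ((Mᵀ * A * M).map (algebraMap ℝ ℂ)), ‖μ‖ < 1 := by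
  intro μ hμ
  set φ := algebraMap ℝ ℂ
  obtain ⟨w, hw0, hw⟩ := (mem_spectrum_iff_exists_mulVec _ μ).mp hμ
  set Mc := M.map φ with hMc
  set Ac := A.map φ with hAc
  set Bc := B.map φ with hBc
  set v : Fin m → ℂ := Mc.mulVec w with hvdef
  -- v ≠ 0
  have hMcM : Mcᵀ * Mc = 1 := by
    rw [hMc, ← Matrix.transpose_map, ← Matrix.map_mul, hM, Matrix.map_one φ (map_zero φ) (map_one φ)]
  have hv0 : v ≠ 0 := by
    intro h
    apply hw0
    have : Mcᵀ.mulVec v = Mcᵀ.mulVec 0 := by rw [h]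
    rwa [hvdef, Matrix.mulVec_mulVec, hMcM, Matrix.one_mulVec, Matrix.mulVec_zero] at this
  -- A v = μ v
  have hAv : Ac.mulVec v = μ • v := by
    have hAM : Ac * Mc = Mc * ((Mᵀ * A * M).map φ) := by
      rw [hAc, hMc, ← Matrix.map_mul, hinv, Matrix.map_mul]
    rw [hvdef, Matrix.mulVec_mulVec, hAM, ← Matrix.mulVec_mulVec, hw, Matrix.mulVec_smul]
  have hμA : μ ∈ spectrum ℂ Ac :=
    (mem_spectrum_iff_exists_mulVec _ μ).mpr ⟨v, hv0, hAv⟩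
  rcases hspec μ hμA with h1 | h
  · -- μ = 1 : contradiction
    exfalso
    subst h1
    rw [one_smul] at hAv
    -- real and imaginary parts are real eigenvectors for eigenvalue 1
    set x : Fin m → ℝ := fun i => (v i).re with hx
    set y : Fin m → ℝ := fun i => (v i).im with hy
    have hre : ∀ (u : Fin m → ℂ) (i : Fin m), (Ac.mulVec u i).re = A.mulVec (fun j => (u j).re) i := by
      intro u i
      simp [Ac, Matrix.mulVec, dotProduct, Complex.re_sum, Complex.mul_re, φ,
        Complex.ofReal_re, Complex.ofReal_im]
    have him : ∀ (u : Fin m → ℂ) (i : Fin m), (Ac.mulVec u i).im = A.mulVec (fun j => (u j).im) i := by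
      intro u i
      simp [Ac, Matrix.mulVec, dotProduct, Complex.im_sum, Complex.mul_im, φ,
        Complex.ofReal_re, Complex.ofReal_im]
    have hAx : A.mulVec x = x := by
      funext i
      rw [hx, ← hre v i, hAv]
    have hAy : A.mulVec y = y := by
      funext i
      rw [hy, ← him v i, hAv]
    -- Bᵀ v = 0
    have hBv : Bcᵀ.mulVec v = 0 := by
      rw [hvdef, Matrix.mulVec_mulVec, hBc, hMc, ← Matrix.transpose_map, ← Matrix.map_mul, hBM]
      simp [Matrix.map_zero φ (map_zero φ)]
    have hBre : ∀ (u : Fin m → ℂ) (i : Fin b), (Bcᵀ.mulVec u i).re = Bᵀ.mulVec (fun j => (u j).re) i := by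
      intro u i
      simp [Bc, Matrix.mulVec, dotProduct, Complex.re_sum, Complex.mul_re, φ,
        Complex.ofReal_re, Complex.ofReal_im]
    have hBim : ∀ (u : Fin m → ℂ) (i : Fin b), (Bcᵀ.mulVec u i).im = Bᵀ.mulVec (fun j => (u j).im) i := by
      intro u i
      simp [Bc, Matrix.mulVec, dotProduct, Complex.im_sum, Complex.mul_im, φ,
        Complex.ofReal_re, Complex.ofReal_im]
    have hBx : Bᵀ.mulVec x = 0 := by
      funext i
      rw [hx, ← hBre v i, hBv]; simp
    have hBy : Bᵀ.mulVec y = 0 := by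
      funext i
      rw [hy, ← hBim v i, hBv]; simp
    have key : ∀ u : Fin m → ℝ, A.mulVec u = u → Bᵀ.mulVec u = 0 → u = 0 := by
      intro u hAu hBu
      obtain ⟨c, rfl⟩ := (hBspan u).mp hAu
      rw [Matrix.mulVec_mulVec, hBo, Matrix.one_mulVec] at hBu
      rw [hBu, Matrix.mulVec_zero]
    have hx0 := key x hAx hBx
    have hy0 := key y hAy hBy
    apply hv0
    funext i
    have h1 : (v i).re = 0 := congrFun hx0 i
    have h2 : (v i).im = 0 := congrFun hy0 i
    exact Complex.ext h1 h2
  · exact h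
end

section
/- Let r_av(x̃) = Λ((11ᵀ/N) - I) x̃ - δ Λ (11ᵀ/N) G(x̃ + 1 x*), where Λ = blkdiag(λ₁ I, …, λ_N I) with each λᵢ ∈ (0,1], f = Σ fᵢ is μ-strongly convex with ∇f(x*) = 0, and each ∇fᵢ is L-Lipschitz. Then for W_av(x̃) = Σᵢ ‖x̃ᵢ‖²/(2λᵢ) and any δ ∈ (0, 4μ/(NL²)), there exists β₃ > 0 such that ∇W_av(x̃)ᵀ r_av(x̃) ≤ -β₃ ‖x̃‖² for all x̃ ∈ ℝ^{Nn}. -/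
open scoped InnerProductSpace
open Finset

set_option maxHeartbeats 1000000

theorem averaged_lyapunov_decrement {N n : ℕ} (hN : 0 < N) (μ L δ : ℝ)
    (hμ : 0 < μ) (hL : 0 < L)
    (g : Fin N → (EuclideanSpace ℝ (Fin n) → EuclideanSpace ℝ (Fin n)))
    (hlip : ∀ i x y, ‖g i x - g i y‖ ≤ L * ‖x - y‖)
    (hstrong : ∀ x y : EuclideanSpace ℝ (Fin n),
      μ * ‖x - y‖ ^ 2 ≤ ⟪(∑ i, g i x) - (∑ i, g i y), x - y⟫_ℝ)
    (xs : EuclideanSpace ℝ (Fin n)) (hxs : (∑ i, g i xs) = 0)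
    (lam : Fin N → ℝ) (hlam : ∀ i, lam i ∈ Set.Ioc (0 : ℝ) 1)
    (hδ : δ ∈ Set.Ioo (0 : ℝ) (4 * μ / (N * L ^ 2))) :
    ∃ β₃ > 0, ∀ xt : Fin N → EuclideanSpace ℝ (Fin n),
      ∑ i, ⟪(lam i)⁻¹ • xt i,
          lam i • (((N : ℝ)⁻¹ • ∑ j, xt j) - xt i) -
            (δ * lam i) • ((N : ℝ)⁻¹ • ∑ j, g j (xt j + xs))⟫_ℝ ≤
        -β₃ * ∑ i, ‖xt i‖ ^ 2 := by
  obtain ⟨hδ0, hδ1⟩ := hδ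
  have hN' : (0:ℝ) < (N:ℝ) := by exact_mod_cast hN
  have hδNL : δ * ((N:ℝ) * L ^ 2) < 4 * μ := by
    rw [lt_div_iff₀ (by positivity)] at hδ1
    linarith
  set t : ℝ := (L * (N:ℝ)^2 / (2*μ) + 2*(N:ℝ) / (δ*L)) / 2 with ht_def
  have ht : 0 < t := by positivity
  have hbnd : L * (N:ℝ)^2 / (2*μ) < 2*(N:ℝ) / (δ*L) := by
    rw [div_lt_div_iff₀ (by positivity) (by positivity)]
    nlinarith
  have htlb : L * (N:ℝ)^2 / (2*μ) < t := by
    rw [ht_def]; linarith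
  have htub : t < 2*(N:ℝ)/(δ*L) := by rw [ht_def]; linarith
  have hc₁ : 0 < 1 - δ * L * t / (2*(N:ℝ)) := by
    rw [sub_pos, div_lt_one (by positivity)]
    rw [lt_div_iff₀ (by positivity)] at htub
    nlinarith
  have hc₂ : 0 < δ * μ / (N:ℝ) - δ * L * (N:ℝ) / (2*t) := by
    rw [sub_pos, div_lt_div_iff₀ (by positivity) hN']
    rw [div_lt_iff₀ (by positivity)] at htlb
    nlinarith
  refine ⟨min (1 - δ * L * t / (2*(N:ℝ))) (δ * μ / (N:ℝ) - δ * L * (N:ℝ) / (2*t)),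
    lt_min hc₁ hc₂, fun xt => ?_⟩
  set S : EuclideanSpace ℝ (Fin n) := ∑ i, xt i with hSdef
  set av : EuclideanSpace ℝ (Fin n) := (N:ℝ)⁻¹ • S with havdef
  set G : EuclideanSpace ℝ (Fin n) := ∑ j, g j (xt j + xs) with hGdef
  set Gc : EuclideanSpace ℝ (Fin n) := ∑ j, g j (av + xs) with hGcdef
  have hnav : ‖av‖ = (N:ℝ)⁻¹ * ‖S‖ := by
    rw [havdef, norm_smul, Real.norm_eq_abs, abs_of_pos (by positivity)]
  have hsum1 : ∑ i, ⟪xt i, av⟫_ℝ = (N:ℝ)⁻¹ * ‖S‖^2 := by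
    rw [← sum_inner, ← hSdef, havdef, real_inner_smul_right,
      real_inner_self_eq_norm_sq]
  have hsum2 : ∑ i, ⟪xt i, G⟫_ℝ = ⟪S, G⟫_ℝ := by
    rw [← sum_inner, ← hSdef]
  have hterm : ∀ i, ⟪(lam i)⁻¹ • xt i,
      lam i • (av - xt i) - (δ * lam i) • ((N:ℝ)⁻¹ • G)⟫_ℝ
      = ⟪xt i, av⟫_ℝ - ‖xt i‖^2 - δ * ((N:ℝ)⁻¹ * ⟪xt i, G⟫_ℝ) := by
    intro i
    have hli : lam i ≠ 0 := ne_of_gt (hlam i).1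
    simp only [real_inner_smul_left, inner_sub_right, real_inner_smul_right,
      real_inner_self_eq_norm_sq]
    field_simp
  have h1 : ∑ i, ⟪(lam i)⁻¹ • xt i,
      lam i • (av - xt i) - (δ * lam i) • ((N:ℝ)⁻¹ • G)⟫_ℝ
      = (N:ℝ)⁻¹ * ‖S‖^2 - (∑ i, ‖xt i‖^2) - δ * ((N:ℝ)⁻¹ * ⟪S, G⟫_ℝ) := by
    simp_rw [hterm]
    rw [Finset.sum_sub_distrib, Finset.sum_sub_distrib, hsum1]
    have : ∑ i, δ * ((N:ℝ)⁻¹ * ⟪xt i, G⟫_ℝ) = δ * ((N:ℝ)⁻¹ * ⟪S, G⟫_ℝ) := by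
      rw [← hsum2, Finset.mul_sum]
      simp_rw [Finset.mul_sum]
    rw [this]
  -- strong convexity at the average
  have h2 : μ * ((N:ℝ)⁻¹ * ‖S‖)^2 ≤ (N:ℝ)⁻¹ * ⟪S, Gc⟫_ℝ := by
    have h := hstrong (av + xs) xs
    have hcanc : (av + xs) - xs = av := add_sub_cancel_right _ _
    rw [hcanc, hxs, sub_zero, ← hGcdef] at h
    rw [← hnav]
    calc μ * ‖av‖^2 ≤ ⟪Gc, av⟫_ℝ := h
      _ = (N:ℝ)⁻¹ * ⟪S, Gc⟫_ℝ := by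
          rw [havdef, real_inner_smul_right, real_inner_comm]
  have h2' : μ * ((N:ℝ)⁻¹ * ‖S‖^2) ≤ ⟪S, Gc⟫_ℝ := by
    have hNne : (N:ℝ) ≠ 0 := ne_of_gt hN'
    have h := mul_le_mul_of_nonneg_left h2 (le_of_lt hN')
    calc μ * ((N:ℝ)⁻¹ * ‖S‖^2) = (N:ℝ) * (μ * ((N:ℝ)⁻¹*‖S‖)^2) := by
          field_simp
      _ ≤ (N:ℝ) * ((N:ℝ)⁻¹ * ⟪S, Gc⟫_ℝ) := h
      _ = ⟪S, Gc⟫_ℝ := by field_simp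
  -- Lipschitz bound
  have h3 : ⟪S, Gc⟫_ℝ - L * (‖S‖ * ∑ j, ‖xt j - av‖) ≤ ⟪S, G⟫_ℝ := by
    have hdiff : ∑ j, ⟪S, g j (xt j + xs) - g j (av + xs)⟫_ℝ
        = ⟪S, G⟫_ℝ - ⟪S, Gc⟫_ℝ := by
      rw [← inner_sum]
      rw [Finset.sum_sub_distrib, ← hGdef, ← hGcdef, inner_sub_right]
    have hb : ∀ j, -(L * (‖S‖ * ‖xt j - av‖))
        ≤ ⟪S, g j (xt j + xs) - g j (av + xs)⟫_ℝ := by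
      intro j
      have ha := abs_real_inner_le_norm S (g j (xt j + xs) - g j (av + xs))
      have hl := hlip j (xt j + xs) (av + xs)
      have hc : (xt j + xs) - (av + xs) = xt j - av := by abel
      rw [hc] at hl
      have hn := neg_abs_le ⟪S, g j (xt j + xs) - g j (av + xs)⟫_ℝ
      have hm := mul_le_mul_of_nonneg_left hl (norm_nonneg S)
      nlinarith [ha, hn, hm]
    have hsumb := Finset.sum_le_sum (fun j (_ : j ∈ Finset.univ) => hb j)
    rw [hdiff] at hsumb
    have heq : ∑ j : Fin N, -(L * (‖S‖ * ‖xt j - av‖))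
        = -(L * (‖S‖ * ∑ j, ‖xt j - av‖)) := by
      rw [Finset.sum_neg_distrib]
      congr 1
      rw [Finset.mul_sum, Finset.mul_sum]
    rw [heq] at hsumb
    linarith
  -- Young's inequality
  have h4 : ‖S‖ * ∑ j, ‖xt j - av‖
      ≤ (N:ℝ)/(2*t) * ‖S‖^2 + t/2 * ∑ j, ‖xt j - av‖^2 := by
    have hterm4 : ∀ j, ‖S‖ * ‖xt j - av‖
        ≤ 1/(2*t)*‖S‖^2 + t/2*‖xt j - av‖^2 := by
      intro j
      rw [← sub_nonneg]
      have heq : 1/(2*t)*‖S‖^2 + t/2*‖xt j - av‖^2 - ‖S‖*‖xt j - av‖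
          = (‖S‖ - t*‖xt j - av‖)^2 / (2*t) := by
        field_simp; ring
      rw [heq]; positivity
    calc ‖S‖ * ∑ j, ‖xt j - av‖ = ∑ j, ‖S‖*‖xt j - av‖ := Finset.mul_sum _ _ _
      _ ≤ ∑ j, (1/(2*t)*‖S‖^2 + t/2*‖xt j - av‖^2) :=
          Finset.sum_le_sum (fun j _ => hterm4 j)
      _ = (N:ℝ)/(2*t)*‖S‖^2 + t/2*∑ j, ‖xt j - av‖^2 := by
          rw [Finset.sum_add_distrib, Finset.sum_const, ← Finset.mul_sum,
            Finset.card_univ, Fintype.card_fin, nsmul_eq_mul]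
          ring
  -- consensus identity
  have h5 : ∑ j, ‖xt j - av‖^2 = (∑ j, ‖xt j‖^2) - (N:ℝ)⁻¹*‖S‖^2 := by
    have hterm5 : ∀ j : Fin N, ‖xt j - av‖^2
        = ‖xt j‖^2 - 2*⟪xt j, av⟫_ℝ + ‖av‖^2 := fun j => norm_sub_sq_real _ _
    simp_rw [hterm5]
    rw [Finset.sum_add_distrib, Finset.sum_sub_distrib, ← Finset.mul_sum, hsum1,
      Finset.sum_const, Finset.card_univ, Fintype.card_fin, nsmul_eq_mul, hnav]
    have hNne : (N:ℝ) ≠ 0 := ne_of_gt hN'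
    field_simp
    ring
  rw [h1]
  have hNne : (N:ℝ) ≠ 0 := ne_of_gt hN'
  have htne : t ≠ 0 := ne_of_gt ht
  have hA0 : (0:ℝ) ≤ ‖S‖^2 := by positivity
  have hDsq0 : (0:ℝ) ≤ ∑ j, ‖xt j - av‖^2 :=
    Finset.sum_nonneg fun j _ => sq_nonneg _
  have step1 : μ * ((N:ℝ)⁻¹ * ‖S‖^2)
      - L*((N:ℝ)/(2*t)*‖S‖^2 + t/2*∑ j, ‖xt j - av‖^2) ≤ ⟪S, G⟫_ℝ := by
    have h4' := mul_le_mul_of_nonneg_left h4 hL.le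
    linarith
  set m : ℝ := min (1 - δ * L * t / (2*(N:ℝ))) (δ * μ / (N:ℝ) - δ * L * (N:ℝ) / (2*t))
    with hmdef
  have hm0 : 0 ≤ m := le_of_lt (lt_min hc₁ hc₂)
  -- cleared (polynomial) versions
  have step1c : δ*(2*t*μ*‖S‖^2 - L*((N:ℝ)^2*‖S‖^2 + t^2*(N:ℝ)*∑ j, ‖xt j - av‖^2))
      ≤ 2*t*(N:ℝ)*δ * ⟪S, G⟫_ℝ := by
    have hpos : (0:ℝ) ≤ 2*t*(N:ℝ)*δ := by positivity
    have h := mul_le_mul_of_nonneg_left step1 hpos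
    have heq : 2*t*(N:ℝ)*δ * (μ * ((N:ℝ)⁻¹ * ‖S‖^2)
        - L*((N:ℝ)/(2*t)*‖S‖^2 + t/2*∑ j, ‖xt j - av‖^2))
        = δ*(2*t*μ*‖S‖^2 - L*((N:ℝ)^2*‖S‖^2 + t^2*(N:ℝ)*∑ j, ‖xt j - av‖^2)) := by
      field_simp
    linarith [heq ▸ h]
  have hm1' : 2*(N:ℝ)*m ≤ 2*(N:ℝ) - δ*L*t := by
    have h := mul_le_mul_of_nonneg_left (min_le_left (1 - δ * L * t / (2*(N:ℝ)))
      (δ * μ / (N:ℝ) - δ * L * (N:ℝ) / (2*t))) (by positivity : (0:ℝ) ≤ 2*(N:ℝ))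
    rw [← hmdef] at h
    have heq : 2*(N:ℝ) * (1 - δ * L * t / (2*(N:ℝ))) = 2*(N:ℝ) - δ*L*t := by
      field_simp
    linarith [heq ▸ h]
  have hm2' : 2*t*(N:ℝ)*m ≤ 2*t*δ*μ - δ*L*(N:ℝ)^2 := by
    have h := mul_le_mul_of_nonneg_left (min_le_right (1 - δ * L * t / (2*(N:ℝ)))
      (δ * μ / (N:ℝ) - δ * L * (N:ℝ) / (2*t))) (by positivity : (0:ℝ) ≤ 2*t*(N:ℝ))
    rw [← hmdef] at h
    have heq : 2*t*(N:ℝ) * (δ * μ / (N:ℝ) - δ * L * (N:ℝ) / (2*t))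
        = 2*t*δ*μ - δ*L*(N:ℝ)^2 := by
      field_simp
    linarith [heq ▸ h]
  have hDsqN : (N:ℝ) * ∑ j, ‖xt j - av‖^2
      = (N:ℝ) * (∑ j, ‖xt j‖^2) - ‖S‖^2 := by
    rw [h5]; field_simp
  have hD1 : t*(N:ℝ)*((N:ℝ) * ∑ j, ‖xt j - av‖^2)
      = t*(N:ℝ)*((N:ℝ) * (∑ j, ‖xt j‖^2) - ‖S‖^2) := by rw [hDsqN]
  have hDm : m*(t*((N:ℝ) * ((N:ℝ) * ∑ j, ‖xt j - av‖^2)))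
      = m*(t*((N:ℝ) * ((N:ℝ) * (∑ j, ‖xt j‖^2) - ‖S‖^2))) := by rw [hDsqN]
  have hp1 : 2*(N:ℝ)*m * (t*(N:ℝ)*∑ j, ‖xt j - av‖^2)
      ≤ (2*(N:ℝ) - δ*L*t) * (t*(N:ℝ)*∑ j, ‖xt j - av‖^2) :=
    mul_le_mul_of_nonneg_right hm1' (mul_nonneg (by positivity) hDsq0)
  have hp2 : 2*t*(N:ℝ)*m * ‖S‖^2 ≤ (2*t*δ*μ - δ*L*(N:ℝ)^2) * ‖S‖^2 :=
    mul_le_mul_of_nonneg_right hm2' hA0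
  -- reduce the goal to the cleared form
  have hscale : (0:ℝ) < 2*t*(N:ℝ)^2 := by positivity
  rw [← mul_le_mul_iff_right₀ hscale]
  have heqL : 2*t*(N:ℝ)^2 * ((N:ℝ)⁻¹ * ‖S‖^2 - (∑ i, ‖xt i‖^2)
      - δ * ((N:ℝ)⁻¹ * ⟪S, G⟫_ℝ))
      = 2*t*(N:ℝ)*‖S‖^2 - 2*t*(N:ℝ)^2*(∑ i, ‖xt i‖^2)
        - 2*t*(N:ℝ)*δ*⟪S, G⟫_ℝ := by
    field_simp
  rw [heqL]
  nlinarith [step1c, hp1, hp2, hD1, hDm]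
end

section
/- Consider the discrete-time system x⁺ = x - γ(I - 11ᵀ/N)x - γδ(11ᵀ/N)G(x + 1 x*), where f = Σᵢ fᵢ is μ-strongly convex, each ∇fᵢ is L-Lipschitz, and x* is the minimizer of f. Then for any γ ∈ (0,1) and δ ∈ (0, 2μ/(NL²)), there exist m > 0 and c₃ > 0 such that the function W(x̃) = (1/2)x̃ᵀ(11ᵀ/N²)x̃ + (m/2)x̃ᵀ R Rᵀ x̃ satisfies W(x̃⁺) - W(x̃) ≤ -c₃ γ ‖x̃‖² along trajectories of the system. -/
noncomputable def rsAvg {N n : ℕ} (x : Fin N → EuclideanSpace ℝ (Fin n)) :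
    EuclideanSpace ℝ (Fin n) := (N : ℝ)⁻¹ • ∑ j, x j

noncomputable def rsAvgG {N n : ℕ}
    (g : Fin N → (EuclideanSpace ℝ (Fin n) → EuclideanSpace ℝ (Fin n)))
    (xs : EuclideanSpace ℝ (Fin n)) (x : Fin N → EuclideanSpace ℝ (Fin n)) :
    EuclideanSpace ℝ (Fin n) := (N : ℝ)⁻¹ • ∑ j, g j (x j + xs)

/-- One step of x̃⁺ = x̃ - γ(I - 11ᵀ/N)x̃ - γδ(11ᵀ/N)G(x̃ + 1x*). -/
noncomputable def rsStep {N n : ℕ} (γ δ : ℝ)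
    (g : Fin N → (EuclideanSpace ℝ (Fin n) → EuclideanSpace ℝ (Fin n)))
    (xs : EuclideanSpace ℝ (Fin n)) (x : Fin N → EuclideanSpace ℝ (Fin n)) :
    Fin N → EuclideanSpace ℝ (Fin n) :=
  fun i => x i - γ • (x i - rsAvg x) - (γ * δ) • rsAvgG g xs x

/-- W(x̃) = (1/2)x̃ᵀ(11ᵀ/N²)x̃ + (m/2)x̃ᵀRRᵀx̃, using that RRᵀ = I - 11ᵀ/N is the
projection onto the consensus-orthogonal subspace. -/
noncomputable def rsW {N n : ℕ} (m : ℝ) (x : Fin N → EuclideanSpace ℝ (Fin n)) : ℝ :=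
  (1 / 2) * ‖rsAvg x‖ ^ 2 + (m / 2) * ∑ i, ‖x i - rsAvg x‖ ^ 2

set_option maxHeartbeats 1000000 in
open scoped InnerProductSpace in
theorem reduced_system_lyapunov {N n : ℕ} (hN : 0 < N) (μ L γ δ : ℝ)
    (hμ : 0 < μ) (hL : 0 < L)
    (g : Fin N → (EuclideanSpace ℝ (Fin n) → EuclideanSpace ℝ (Fin n)))
    (hlip : ∀ i x y, ‖g i x - g i y‖ ≤ L * ‖x - y‖)
    (hstrong : ∀ x y : EuclideanSpace ℝ (Fin n),
      μ * ‖x - y‖ ^ 2 ≤ ⟪(∑ i, g i x) - (∑ i, g i y), x - y⟫_ℝ)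
    (xs : EuclideanSpace ℝ (Fin n)) (hxs : (∑ i, g i xs) = 0)
    (hγ : γ ∈ Set.Ioo (0 : ℝ) 1)
    (hδ : δ ∈ Set.Ioo (0 : ℝ) (2 * μ / (N * L ^ 2))) :
    ∃ m > (0 : ℝ), ∃ c₃ > (0 : ℝ), ∀ x : Fin N → EuclideanSpace ℝ (Fin n),
      rsW m (rsStep γ δ g xs x) - rsW m x ≤ -c₃ * γ * ∑ i, ‖x i‖ ^ 2 := by
  obtain ⟨hγ0, hγ1⟩ := hγ
  obtain ⟨hδ0, hδ2⟩ := hδ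
  have hN' : (0:ℝ) < N := by exact_mod_cast hN
  have hκ : 0 < 2*μ/N - δ*L^2 := by
    have h1 : δ * (N * L^2) < 2*μ := (lt_div_iff₀ (by positivity)).mp hδ2
    rw [sub_pos, lt_div_iff₀ hN']
    nlinarith
  set κ : ℝ := 2*μ/N - δ*L^2 with hκdef
  set D : ℝ := δ*(1+δ*L)*L/N with hDdef
  set E : ℝ := δ^2*L^2/(2*N) with hEdef
  have hDpos : 0 < D := by rw [hDdef]; positivity
  have hEpos : 0 < E := by rw [hEdef]; positivity
  have hq : 0 < δ*κ := by positivity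
  refine ⟨2*E + 2*D^2*N/(δ*κ) + δ*κ/(2*N), by positivity, δ*κ/(4*N), by positivity, ?_⟩
  set M : ℝ := 2*E + 2*D^2*N/(δ*κ) + δ*κ/(2*N) with hMdef
  have hMpos : 0 < M := by rw [hMdef]; positivity
  intro x
  set a := rsAvg x with ha
  set G := rsAvgG g xs x with hG
  set h : EuclideanSpace ℝ (Fin n) := (N:ℝ)⁻¹ • ∑ j, g j (a + xs) with hh
  have hsumx : ∑ j, x j = (N:ℝ) • a := by
    rw [ha, rsAvg, smul_smul, mul_inv_cancel₀ (ne_of_gt hN'), one_smul]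
  have hzero : ∑ i, (x i - a) = 0 := by
    rw [Finset.sum_sub_distrib, hsumx, Finset.sum_const, Finset.card_univ,
      Fintype.card_fin, ← Nat.cast_smul_eq_nsmul ℝ, sub_self]
  have hstepsum : ∑ i, rsStep γ δ g xs x i = (N:ℝ) • (a - (γ*δ) • G) := by
    have e : ∀ i, rsStep γ δ g xs x i = (1-γ) • (x i - a) + (a - (γ*δ) • G) := by
      intro i; simp only [rsStep, ← ha, ← hG]; module
    rw [Finset.sum_congr rfl fun i _ => e i, Finset.sum_add_distrib, ← Finset.smul_sum,
      hzero, smul_zero, zero_add, Finset.sum_const, Finset.card_univ, Fintype.card_fin,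
      ← Nat.cast_smul_eq_nsmul ℝ]
  have havg : rsAvg (rsStep γ δ g xs x) = a - (γ*δ) • G := by
    rw [rsAvg, hstepsum, smul_smul, inv_mul_cancel₀ (ne_of_gt hN'), one_smul]
  have hdev : ∀ i, rsStep γ δ g xs x i - rsAvg (rsStep γ δ g xs x) = (1-γ) • (x i - a) := by
    intro i; rw [havg]; simp only [rsStep, ← ha, ← hG]; module
  set A : ℝ := ‖a‖ with hA
  set B2 : ℝ := ∑ i, ‖x i - a‖^2 with hB2def
  set s : ℝ := ∑ i, ‖x i - a‖ with hsdef
  set t : ℝ := ‖G - h‖ with htdef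
  have hAnn : 0 ≤ A := norm_nonneg _
  have htnn : 0 ≤ t := norm_nonneg _
  have hsnn : 0 ≤ s := Finset.sum_nonneg fun i _ => norm_nonneg _
  have hB2nn : 0 ≤ B2 := Finset.sum_nonneg fun i _ => by positivity
  -- strong convexity at consensus
  have hinner : μ/N * A^2 ≤ ⟪a, h⟫_ℝ := by
    have h1 := hstrong (a + xs) xs
    rw [hxs, sub_zero, add_sub_cancel_right] at h1
    rw [hh, real_inner_smul_right, real_inner_comm]
    have e : μ/N*A^2 = (N:ℝ)⁻¹ * (μ*‖a‖^2) := by rw [hA]; ring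
    rw [e]
    exact mul_le_mul_of_nonneg_left h1 (by positivity)
  have hih : μ/N*A^2 - A*t ≤ ⟪a, G⟫_ℝ := by
    have h2 : |⟪a, G - h⟫_ℝ| ≤ A * t := by
      rw [hA, htdef]; exact abs_real_inner_le_norm a (G - h)
    have h3 : ⟪a, G⟫_ℝ = ⟪a, h⟫_ℝ + ⟪a, G - h⟫_ℝ := by
      rw [← inner_add_right]; congr 1; abel
    have := abs_le.mp h2
    linarith
  have hnh : ‖h‖ ≤ L * A := by
    have e : (∑ j, g j (a + xs)) = ∑ j, (g j (a + xs) - g j xs) := by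
      rw [Finset.sum_sub_distrib, hxs, sub_zero]
    rw [hh, e, norm_smul, Real.norm_eq_abs, abs_of_nonneg (by positivity)]
    calc (N:ℝ)⁻¹ * ‖∑ j, (g j (a + xs) - g j xs)‖
        ≤ (N:ℝ)⁻¹ * ∑ j, L * A := by
          gcongr
          refine (norm_sum_le _ _).trans (Finset.sum_le_sum fun j _ => ?_)
          have := hlip j (a + xs) xs
          rwa [add_sub_cancel_right] at this
      _ = L * A := by
          rw [Finset.sum_const, Finset.card_univ, Fintype.card_fin, nsmul_eq_mul]
          field_simp
  have ht : t ≤ L/N * s := by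
    have hGh : G - h = (N:ℝ)⁻¹ • ∑ j, (g j (x j + xs) - g j (a + xs)) := by
      rw [hG, rsAvgG, hh, ← smul_sub, Finset.sum_sub_distrib]
    rw [htdef, hGh, norm_smul, Real.norm_eq_abs, abs_of_nonneg (by positivity)]
    calc (N:ℝ)⁻¹ * ‖∑ j, (g j (x j + xs) - g j (a + xs))‖
        ≤ (N:ℝ)⁻¹ * ∑ j, L * ‖x j - a‖ := by
          gcongr
          refine (norm_sum_le _ _).trans (Finset.sum_le_sum fun j _ => ?_)
          have := hlip j (x j + xs) (a + xs)
          rwa [add_sub_add_right_eq_sub] at this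
      _ = L/N * s := by
          rw [← Finset.mul_sum, hsdef]; ring
  have hs2 : s^2 ≤ N * B2 := by
    have := sq_sum_le_card_mul_sum_sq (s := (Finset.univ : Finset (Fin N)))
      (f := fun i => ‖x i - a‖)
    simpa [hsdef, hB2def] using this
  have hx2 : ∑ i, ‖x i‖^2 = N * A^2 + B2 := by
    have e1 : ∀ i, ‖x i‖^2 = ‖x i - a‖^2 + 2*⟪x i - a, a⟫_ℝ + A^2 := by
      intro i
      have := norm_add_sq_real (x i - a) a
      rwa [sub_add_cancel] at this
    rw [Finset.sum_congr rfl fun i _ => e1 i, Finset.sum_add_distrib,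
      Finset.sum_add_distrib, Finset.sum_const, Finset.card_univ, Fintype.card_fin,
      nsmul_eq_mul]
    have e2 : ∑ i, 2*⟪x i - a, a⟫_ℝ = 2 * ⟪∑ i, (x i - a), a⟫_ℝ := by
      rw [sum_inner, Finset.mul_sum]
    rw [e2, hzero, inner_zero_left, mul_zero, ← hB2def]
    ring
  have hGn2 : ‖G‖^2 ≤ (L*A + t)^2 := by
    have hGn : ‖G‖ ≤ L*A + t := by
      calc ‖G‖ = ‖h + (G - h)‖ := by congr 1; abel
        _ ≤ ‖h‖ + ‖G - h‖ := norm_add_le _ _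
        _ ≤ L*A + t := by rw [← htdef]; exact add_le_add hnh le_rfl
    exact pow_le_pow_left₀ (norm_nonneg G) hGn 2
  -- the value of W after one step
  have hWstep : rsW M (rsStep γ δ g xs x) = 1/2*‖a - (γ*δ) • G‖^2 + M/2*((1-γ)^2*B2) := by
    have e2 : ∑ i, ‖rsStep γ δ g xs x i - rsAvg (rsStep γ δ g xs x)‖^2 = (1-γ)^2*B2 := by
      rw [hB2def, Finset.mul_sum]
      refine Finset.sum_congr rfl fun i _ => ?_
      rw [hdev i, norm_smul, Real.norm_eq_abs, mul_pow, sq_abs]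
    rw [rsW, e2, havg]
  have hWx : rsW M x = 1/2*A^2 + M/2*B2 := by rw [rsW, ← ha, ← hA, ← hB2def]
  have hexp : ‖a - (γ*δ) • G‖^2 = A^2 - 2*(γ*δ)*⟪a, G⟫_ℝ + (γ*δ)^2*‖G‖^2 := by
    rw [norm_sub_sq_real, real_inner_smul_right, norm_smul, Real.norm_eq_abs,
      abs_of_nonneg (by positivity), mul_pow, ← hA]
    ring
  have key1 : ‖a - (γ*δ) • G‖^2
      ≤ A^2 - 2*(γ*δ)*(μ/N*A^2 - A*t) + (γ*δ)^2*(L*A+t)^2 := by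
    rw [hexp]
    have hgd : (0:ℝ) ≤ 2*(γ*δ) := by positivity
    have h1 := mul_le_mul_of_nonneg_left hih hgd
    have h2 := mul_le_mul_of_nonneg_left hGn2 (sq_nonneg (γ*δ))
    linarith
  -- now pure real arithmetic
  rw [hx2]
  have hdiff : rsW M (rsStep γ δ g xs x) - rsW M x
      ≤ 1/2*(A^2 - 2*(γ*δ)*(μ/N*A^2 - A*t) + (γ*δ)^2*(L*A+t)^2 - A^2)
        + M/2*((1-γ)^2 - 1)*B2 := by
    rw [hWstep, hWx]
    linarith [key1]
  have expand : (1:ℝ)/2*(A^2 - 2*(γ*δ)*(μ/N*A^2 - A*t) + (γ*δ)^2*(L*A+t)^2 - A^2)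
      = (γ^2*δ^2/2*L^2*A^2 - γ*δ*(μ/N)*A^2) + (γ*δ*A*t + γ^2*δ^2*L*A*t)
        + γ^2*δ^2/2*t^2 := by ring
  -- A² terms
  have h1γ : (0:ℝ) ≤ 1 - γ := by linarith
  have st1 : γ^2*δ^2/2*L^2*A^2 - γ*δ*(μ/N)*A^2 ≤ -(γ*(δ*κ)/2)*A^2 := by
    rw [hκdef, ← sub_nonneg]
    have e : -(γ*(δ*(2*μ/(N:ℝ) - δ*L^2))/2)*A^2 - (γ^2*δ^2/2*L^2*A^2 - γ*δ*(μ/(N:ℝ))*A^2)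
        = ((1-γ)*γ)*(δ^2*L^2*A^2)/2 := by ring
    rw [e]
    have h0 : (0:ℝ) ≤ (1-γ)*γ := mul_nonneg h1γ hγ0.le
    positivity
  -- cross terms
  have st2 : γ*δ*A*t + γ^2*δ^2*L*A*t ≤ γ*(δ*(1+δ*L))*A*t := by
    rw [← sub_nonneg]
    have e : γ*(δ*(1+δ*L))*A*t - (γ*δ*A*t + γ^2*δ^2*L*A*t)
        = ((1-γ)*γ)*(δ^2*L*A*t) := by ring
    rw [e]
    have h0 : (0:ℝ) ≤ (1-γ)*γ := mul_nonneg h1γ hγ0.le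
    have h0' : (0:ℝ) ≤ A*t := mul_nonneg hAnn htnn
    positivity
  have st3 : γ*(δ*(1+δ*L))*A*t ≤ γ*D*A*s := by
    have h1 : γ*(δ*(1+δ*L))*A*t ≤ γ*(δ*(1+δ*L))*A*(L/N*s) := by
      have hc : 0 ≤ γ*(δ*(1+δ*L))*A := by positivity
      exact mul_le_mul_of_nonneg_left ht hc
    have h2 : γ*(δ*(1+δ*L))*A*(L/N*s) = γ*D*A*s := by rw [hDdef]; ring
    linarith [h2 ▸ h1]
  have young : D*A*s ≤ δ*κ/4*A^2 + D^2/(δ*κ)*s^2 := by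
    rw [← sub_nonneg]
    have e : δ*κ/4*A^2 + D^2/(δ*κ)*s^2 - D*A*s = (δ*κ*A - 2*D*s)^2/(4*(δ*κ)) := by
      field_simp
      ring
    rw [e]
    positivity
  have st5 : γ*D*A*s ≤ γ*(δ*κ/4)*A^2 + γ*(D^2*N/(δ*κ))*B2 := by
    have h1 : D^2/(δ*κ)*s^2 ≤ D^2/(δ*κ)*(N*B2) := by
      apply mul_le_mul_of_nonneg_left hs2 (by positivity)
    have h2 : D*A*s ≤ δ*κ/4*A^2 + D^2*N/(δ*κ)*B2 := by
      have e : D^2/(δ*κ)*(N*B2) = D^2*N/(δ*κ)*B2 := by ring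
      linarith [young, e ▸ h1]
    linarith [mul_le_mul_of_nonneg_left h2 hγ0.le]
  -- t² term
  have st4 : γ^2*δ^2/2*t^2 ≤ γ*E*B2 := by
    have ht2 : t^2 ≤ (L/N)^2 * s^2 := by
      have := pow_le_pow_left₀ htnn ht 2
      calc t^2 ≤ (L/N*s)^2 := this
        _ = (L/N)^2 * s^2 := by ring
    have ht3 : (L/N)^2 * s^2 ≤ (L/N)^2 * (N*B2) := by
      apply mul_le_mul_of_nonneg_left hs2 (by positivity)
    have e : (L/N)^2 * (N*B2) = L^2/N * B2 := by field_simp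
    have ht4 : t^2 ≤ L^2/N * B2 := by linarith [e ▸ ht3]
    have c1 : γ^2*δ^2/2*t^2 ≤ γ*δ^2/2*t^2 := by
      rw [← sub_nonneg]
      have e : γ*δ^2/2*t^2 - γ^2*δ^2/2*t^2 = ((1-γ)*γ)*(δ^2*t^2)/2 := by ring
      rw [e]
      have h0 : (0:ℝ) ≤ (1-γ)*γ := mul_nonneg h1γ hγ0.le
      positivity
    have c2 : γ*δ^2/2*t^2 ≤ γ*δ^2/2*(L^2/N*B2) :=
      mul_le_mul_of_nonneg_left ht4 (by positivity)
    have : γ^2*δ^2/2*t^2 ≤ γ*δ^2/2*(L^2/N*B2) := le_trans c1 c2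
    have e2 : γ*δ^2/2*(L^2/N*B2) = γ*E*B2 := by rw [hEdef]; ring
    linarith [e2 ▸ this]
  -- m-term
  have st6 : M/2*((1-γ)^2 - 1)*B2 ≤ -(γ*(M/2))*B2 := by
    rw [← sub_nonneg]
    have e : -(γ*(M/2))*B2 - M/2*((1-γ)^2 - 1)*B2 = (M*B2/2)*((1-γ)*γ) := by ring
    rw [e]
    exact mul_nonneg (div_nonneg (mul_nonneg hMpos.le hB2nn) (by norm_num))
      (mul_nonneg h1γ hγ0.le)
  have hMhalf : M/2 = E + D^2*N/(δ*κ) + δ*κ/(4*N) := by rw [hMdef]; ring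
  have final : 1/2*(A^2 - 2*(γ*δ)*(μ/N*A^2 - A*t) + (γ*δ)^2*(L*A+t)^2 - A^2)
      + M/2*((1-γ)^2 - 1)*B2 ≤ -(δ*κ/(4*N))*γ*(N*A^2 + B2) := by
    have hcross : γ*δ*A*t + γ^2*δ^2*L*A*t ≤ γ*(δ*κ/4)*A^2 + γ*(D^2*N/(δ*κ))*B2 :=
      le_trans (le_trans st2 st3) st5
    have hM6 : M/2*((1-γ)^2 - 1)*B2
        ≤ -(γ*(E + D^2*N/(δ*κ) + δ*κ/(4*N)))*B2 := by
      rw [← hMhalf]; exact st6.trans (by rw [hMhalf])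
    have heq : -(γ*(δ*κ)/2)*A^2 + (γ*(δ*κ/4)*A^2 + γ*(D^2*N/(δ*κ))*B2) + γ*E*B2
        + (-(γ*(E + D^2*N/(δ*κ) + δ*κ/(4*N)))*B2) = -(δ*κ/(4*N))*γ*(N*A^2 + B2) := by
      field_simp
      ring
    rw [expand]
    linarith [st1, hcross, st4, hM6, heq]
  linarith [hdiff, final]
end

section
/- Let P be a symmetric permutation-like matrix (P = Pᵀ, P² = I), A a matrix, and H a symmetric positive definite diagonal matrix. If B has columns spanning ker(I + P - 2ρ P A H Aᵀ) for some ρ > 0, and ker(I + P - 2ρ P A H Aᵀ) ⊆ ker(Aᵀ), then Bᵀ(I + P) = 0, Bᵀ A = 0, and Bᵀ P A = 0. -/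
open Matrix

theorem kernel_orthogonality_relations {m k b : ℕ} (ρ : ℝ) (hρ : 0 < ρ)
    (P : Matrix (Fin m) (Fin m) ℝ) (hPsymm : P = Pᵀ) (hPinv : P * P = 1)
    (A : Matrix (Fin m) (Fin k) ℝ)
    (H : Matrix (Fin k) (Fin k) ℝ) (hH : H.PosDef) (hHdiag : H.IsDiag)
    (B : Matrix (Fin m) (Fin b) ℝ)
    (hBker : ((1 : Matrix (Fin m) (Fin m) ℝ) + P - (2 * ρ) • (P * A * H * Aᵀ)) * B = 0)
    (hkerA : ∀ v : Fin m → ℝ,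
      ((1 : Matrix (Fin m) (Fin m) ℝ) + P - (2 * ρ) • (P * A * H * Aᵀ)).mulVec v = 0 →
        Aᵀ.mulVec v = 0)
    (hkerPA : ∀ v : Fin m → ℝ, (Aᵀ * P).mulVec v = 0 → Aᵀ.mulVec v = 0) :
    Bᵀ * ((1 : Matrix (Fin m) (Fin m) ℝ) + P) = 0 ∧ Bᵀ * A = 0 ∧ Bᵀ * P * A = 0 := by
  have hAB : Aᵀ * B = 0 := by
    ext i j
    have hcol : ((1 : Matrix (Fin m) (Fin m) ℝ) + P
        - (2 * ρ) • (P * A * H * Aᵀ)).mulVec (fun r => B r j) = 0 := by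
      funext i'
      have := congrFun (congrFun hBker i') j
      simpa [Matrix.mul_apply, Matrix.mulVec, dotProduct] using this
    have := congrFun (hkerA _ hcol) i
    simpa [Matrix.mul_apply, Matrix.mulVec, dotProduct] using this
  have h1P : ((1 : Matrix (Fin m) (Fin m) ℝ) + P) * B = 0 := by
    have : ((1 : Matrix (Fin m) (Fin m) ℝ) + P) * B
        - (2 * ρ) • (P * A * H * (Aᵀ * B)) = 0 := by
      calc ((1 : Matrix (Fin m) (Fin m) ℝ) + P) * B - (2 * ρ) • (P * A * H * (Aᵀ * B))
          = ((1 : Matrix (Fin m) (Fin m) ℝ) + P - (2 * ρ) • (P * A * H * Aᵀ)) * B := by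
            simp only [Matrix.sub_mul, Matrix.smul_mul, Matrix.mul_assoc]
        _ = 0 := hBker
    simpa [hAB] using this
  have hBA : Bᵀ * A = 0 := by
    have := congrArg Matrix.transpose hAB
    simpa [Matrix.transpose_mul] using this
  have hPB : P * B = -B := by
    have : (1 : Matrix (Fin m) (Fin m) ℝ) * B + P * B = 0 := by
      rw [← Matrix.add_mul]; exact h1P
    rw [Matrix.one_mul] at this
    exact eq_neg_of_add_eq_zero_left (by rwa [add_comm] at this)
  refine ⟨?_, hBA, ?_⟩
  · have := congrArg Matrix.transpose h1P
    simpa [Matrix.transpose_mul, Matrix.transpose_add, ← hPsymm] using this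
  · have hBTP : Bᵀ * P = -Bᵀ := by
      have := congrArg Matrix.transpose hPB
      simpa [Matrix.transpose_mul, ← hPsymm] using this
    rw [hBTP]
    simp [Matrix.neg_mul, hBA]
end

section
/- Singular perturbation composite Lyapunov theorem (discrete time): Suppose W and U satisfy the decrement inequalities ΔW ≤ -c₃γ‖x‖² + γk₁‖z̃‖‖x‖ + γ²k₂‖z̃‖‖x‖ + γ²k₃‖z̃‖² and ΔU ≤ (-b₃ + γk₆ + γ²k₇)‖z̃‖² + γ²k₈‖x‖² + (γk₄ + γ²k₅)‖x‖‖z̃‖ along trajectories of a coupled system, with all constants positive. Then there exists γ̄ > 0 such that for all γ ∈ (0, γ̄) the 2×2 matrix Q(γ) = [[γc₃ - γ²k₈, q(γ)],[q(γ), b₃ - γk₆ - γ²(k₃+k₇)]] with q(γ) = -(γ(k₁+k₄) + γ²(k₂+k₅))/2 is positive definite, and hence Δ(W+U) ≤ -λ_min(Q(γ))(‖x‖² + ‖z̃‖²). -/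
set_option maxHeartbeats 1000000


open Matrix

lemma quad_pos_aux (a b c x y : ℝ) (ha : 0 < a) (hc : 0 < c) (hd : b ^ 2 < a * c)
    (h : x ≠ 0 ∨ y ≠ 0) : 0 < x * (a * x + b * y) + y * (b * x + c * y) := by
  rcases h with h | h
  · nlinarith [sq_nonneg (b * x + c * y), mul_pos (sub_pos.mpr hd) (sq_pos_of_ne_zero h)]
  · nlinarith [sq_nonneg (a * x + b * y), mul_pos (sub_pos.mpr hd) (sq_pos_of_ne_zero h)]

theorem singular_perturbation_composite_lyapunov
    (c₃ b₃ k₁ k₂ k₃ k₄ k₅ k₆ k₇ k₈ : ℝ)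
    (hc₃ : 0 < c₃) (hb₃ : 0 < b₃) (hk₁ : 0 < k₁) (hk₂ : 0 < k₂) (hk₃ : 0 < k₃)
    (hk₄ : 0 < k₄) (hk₅ : 0 < k₅) (hk₆ : 0 < k₆) (hk₇ : 0 < k₇) (hk₈ : 0 < k₈) :
    ∃ γbar > (0 : ℝ), ∀ γ ∈ Set.Ioo (0 : ℝ) γbar,
      (!![γ * c₃ - γ ^ 2 * k₈, -(γ * (k₁ + k₄) + γ ^ 2 * (k₂ + k₅)) / 2;
          -(γ * (k₁ + k₄) + γ ^ 2 * (k₂ + k₅)) / 2,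
          b₃ - γ * k₆ - γ ^ 2 * (k₃ + k₇)] : Matrix (Fin 2) (Fin 2) ℝ).PosDef ∧
      ∀ q : ℝ,
        (∀ v : Fin 2 → ℝ, q * (v ⬝ᵥ v) ≤
          v ⬝ᵥ (!![γ * c₃ - γ ^ 2 * k₈, -(γ * (k₁ + k₄) + γ ^ 2 * (k₂ + k₅)) / 2;
              -(γ * (k₁ + k₄) + γ ^ 2 * (k₂ + k₅)) / 2,
              b₃ - γ * k₆ - γ ^ 2 * (k₃ + k₇)] : Matrix (Fin 2) (Fin 2) ℝ).mulVec v) →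
        ∀ x z ΔW ΔU : ℝ, 0 ≤ x → 0 ≤ z →
          ΔW ≤ -c₃ * γ * x ^ 2 + γ * k₁ * z * x + γ ^ 2 * k₂ * z * x + γ ^ 2 * k₃ * z ^ 2 →
          ΔU ≤ (-b₃ + γ * k₆ + γ ^ 2 * k₇) * z ^ 2 + γ ^ 2 * k₈ * x ^ 2 +
            (γ * k₄ + γ ^ 2 * k₅) * x * z →
          ΔW + ΔU ≤ -q * (x ^ 2 + z ^ 2) := by
  set K : ℝ := k₁ + k₄ + k₂ + k₅ with hKdef
  have hK : 0 < K := by positivity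
  refine ⟨min 1 (min (c₃ / (2 * k₈)) (min (b₃ / (2 * (k₆ + k₃ + k₇))) (c₃ * b₃ / K ^ 2))),
    by positivity, ?_⟩
  rintro γ ⟨hγ0, hγlt⟩
  have hγ1 : γ < 1 := lt_of_lt_of_le hγlt (min_le_left _ _)
  have hγ2 : γ < c₃ / (2 * k₈) :=
    lt_of_lt_of_le hγlt ((min_le_right _ _).trans (min_le_left _ _))
  have hγ3 : γ < b₃ / (2 * (k₆ + k₃ + k₇)) :=
    lt_of_lt_of_le hγlt (((min_le_right _ _).trans (min_le_right _ _)).trans (min_le_left _ _))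
  have hγ4 : γ < c₃ * b₃ / K ^ 2 :=
    lt_of_lt_of_le hγlt (((min_le_right _ _).trans (min_le_right _ _)).trans (min_le_right _ _))
  have h2 : γ * k₈ < c₃ / 2 := by
    rw [lt_div_iff₀ (by positivity)] at hγ2; nlinarith
  have h3 : γ * (k₆ + k₃ + k₇) < b₃ / 2 := by
    rw [lt_div_iff₀ (by positivity)] at hγ3; nlinarith
  have h4 : γ * K ^ 2 < c₃ * b₃ := by
    rw [lt_div_iff₀ (by positivity)] at hγ4; nlinarith
  have hγsq : γ ^ 2 ≤ γ := by nlinarith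
  -- entries
  have ha : γ * c₃ / 2 < γ * c₃ - γ ^ 2 * k₈ := by nlinarith
  have hc : b₃ / 2 < b₃ - γ * k₆ - γ ^ 2 * (k₃ + k₇) := by
    nlinarith [mul_le_mul_of_nonneg_right hγsq (by positivity : (0:ℝ) ≤ k₃ + k₇)]
  have hb : (γ * (k₁ + k₄) + γ ^ 2 * (k₂ + k₅)) ≤ γ * K := by
    nlinarith [mul_le_mul_of_nonneg_right hγsq (by positivity : (0:ℝ) ≤ k₂ + k₅)]
  have hbnn : 0 ≤ γ * (k₁ + k₄) + γ ^ 2 * (k₂ + k₅) := by positivity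
  have hdet : ((γ * (k₁ + k₄) + γ ^ 2 * (k₂ + k₅)) / 2) ^ 2 <
      (γ * c₃ - γ ^ 2 * k₈) * (b₃ - γ * k₆ - γ ^ 2 * (k₃ + k₇)) := by
    have h5 : (γ * (k₁ + k₄) + γ ^ 2 * (k₂ + k₅)) ^ 2 ≤ (γ * K) ^ 2 := by
      nlinarith
    have h6 : (γ * K) ^ 2 < γ * (c₃ * b₃) := by
      have := mul_lt_mul_of_pos_left h4 hγ0
      nlinarith
    have h7 := mul_lt_mul'' ha hc (by positivity) (by positivity)
    nlinarith
  constructor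
  · refine Matrix.PosDef.of_dotProduct_mulVec_pos ?_ ?_
    · unfold Matrix.IsHermitian
      ext i j
      fin_cases i <;> fin_cases j <;> simp [Matrix.conjTranspose_apply]
    · intro v hv
      have hv' : v 0 ≠ 0 ∨ v 1 ≠ 0 := by
        by_contra h
        push_neg at h
        exact hv (funext fun i => by fin_cases i <;> simp [h.1, h.2])
      simp only [Matrix.mulVec, dotProduct, Fin.sum_univ_two, star, Pi.star_apply,
        star_trivial, Matrix.cons_val', Matrix.cons_val_zero, Matrix.cons_val_one,
        Matrix.head_cons, Matrix.head_fin_const, Matrix.empty_val', Matrix.cons_val_fin_one,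
        Matrix.of_apply]
      have ha0 : 0 < γ * c₃ - γ ^ 2 * k₈ := by nlinarith [mul_pos hγ0 hc₃]
      have hc0 : 0 < b₃ - γ * k₆ - γ ^ 2 * (k₃ + k₇) := by linarith [half_pos hb₃]
      have hd' : (-(γ * (k₁ + k₄) + γ ^ 2 * (k₂ + k₅)) / 2) ^ 2 <
          (γ * c₃ - γ ^ 2 * k₈) * (b₃ - γ * k₆ - γ ^ 2 * (k₃ + k₇)) := by
        have he : (-(γ * (k₁ + k₄) + γ ^ 2 * (k₂ + k₅)) / 2) ^ 2 =
            ((γ * (k₁ + k₄) + γ ^ 2 * (k₂ + k₅)) / 2) ^ 2 := by ring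
        linarith [hdet]
      exact quad_pos_aux _ _ _ _ _ ha0 hc0 hd' hv'
  · intro q hq x z ΔW ΔU hx hz hW hU
    have hkey := hq ![x, z]
    simp only [Matrix.mulVec, dotProduct, Fin.sum_univ_two, Matrix.cons_val_zero,
      Matrix.cons_val_one, Matrix.head_cons, Matrix.cons_val', Matrix.empty_val',
      Matrix.cons_val_fin_one, Matrix.of_apply, Matrix.vecHead] at hkey
    have hsum : ΔW + ΔU ≤
        -(x * ((γ * c₃ - γ ^ 2 * k₈) * x + -(γ * (k₁ + k₄) + γ ^ 2 * (k₂ + k₅)) / 2 * z) +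
          z * (-(γ * (k₁ + k₄) + γ ^ 2 * (k₂ + k₅)) / 2 * x +
            (b₃ - γ * k₆ - γ ^ 2 * (k₃ + k₇)) * z)) := by
      have h0 := add_le_add hW hU
      have he : -c₃ * γ * x ^ 2 + γ * k₁ * z * x + γ ^ 2 * k₂ * z * x + γ ^ 2 * k₃ * z ^ 2 +
          ((-b₃ + γ * k₆ + γ ^ 2 * k₇) * z ^ 2 + γ ^ 2 * k₈ * x ^ 2 +
            (γ * k₄ + γ ^ 2 * k₅) * x * z) =
          -(x * ((γ * c₃ - γ ^ 2 * k₈) * x + -(γ * (k₁ + k₄) + γ ^ 2 * (k₂ + k₅)) / 2 * z) +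
            z * (-(γ * (k₁ + k₄) + γ ^ 2 * (k₂ + k₅)) / 2 * x +
              (b₃ - γ * k₆ - γ ^ 2 * (k₃ + k₇)) * z)) := by ring
      linarith
    have hxz : x * x + z * z = x ^ 2 + z ^ 2 := by ring
    rw [hxz] at hkey
    linarith
end
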